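/- For a chain a of degree at least n in an augmented directed complex with basis, the part of a in degrees ≤ n−1 coincides with the meet of its source and target: r_{n-1}(a) = d⁻_{n-1}(a) ∧ d⁺_{n-1}(a). -/

import Mathlib

/-! Chains in an augmented directed complex with basis.  An augmented directed complex
with basis `B` is encoded by a degree function `deg : B → ℕ`, a differential given on
basis elements `diff : B → (B →₀ ℤ)` and an augmentation `aug : B → ℤ` on the basis
(the predicate `IsADC` expresses the chain-complex and augmentation axioms).
A *chain* is a finitely supported function `B → ℕ`, i.e. a nonnegative combination of
basis elements. -/

namespace Chains

/-- Positive part of an integral combination, as a chain. -/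
noncomputable def posPart {B : Type*} (x : B →₀ ℤ) : B →₀ ℕ :=
  x.mapRange Int.toNat (by simp)

/-- Negative part of an integral combination, as a chain. -/
noncomputable def negPart {B : Type*} (x : B →₀ ℤ) : B →₀ ℕ :=
  x.mapRange (fun k => (-k).toNat) (by simp)

/-- Inclusion of chains into integral combinations. -/
noncomputable def toInt {B : Type*} (a : B →₀ ℕ) : B →₀ ℤ :=
  a.mapRange (Nat.cast : ℕ → ℤ) (by simp)

/-- Pointwise minimum (`∧`) of chains. -/
noncomputable def cmin {B : Type*} [DecidableEq B] (a a' : B →₀ ℕ) : B →₀ ℕ :=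
  Finsupp.zipWith min (by simp) a a'

/-- Pointwise maximum (`∨`) of chains. -/
noncomputable def cmax {B : Type*} [DecidableEq B] (a a' : B →₀ ℕ) : B →₀ ℕ :=
  Finsupp.zipWith max (by simp) a a'

/-- Truncated subtraction (`∖`) of chains. -/
noncomputable def csub {B : Type*} [DecidableEq B] (a a' : B →₀ ℕ) : B →₀ ℕ :=
  Finsupp.zipWith (fun m n => m - n) (by simp) a a'

/-- The differential extended to chains. -/
noncomputable def bdry {B : Type*} (diff : B → B →₀ ℤ) (a : B →₀ ℕ) : B →₀ ℤ :=
  a.sum fun b k => (k : ℤ) • diff b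

/-- The positive (`α = true`) and negative (`α = false`) part of the differential. -/
noncomputable def bdryP {B : Type*} (diff : B → B →₀ ℤ) (α : Bool) (a : B →₀ ℕ) :
    B →₀ ℕ :=
  if α then posPart (bdry diff a) else negPart (bdry diff a)

open Classical in
/-- The degree-`k` homogeneous part `(a)ₖ` of a chain. -/
noncomputable def homog {B : Type*} (deg : B → ℕ) (k : ℕ) (a : B →₀ ℕ) : B →₀ ℕ :=
  a.filter fun b => deg b = k

open Classical in
/-- The `k`-rest `rₖ(a)`: the part of a chain in degrees `≤ k`. -/
noncomputable def trunc {B : Type*} (deg : B → ℕ) (k : ℕ) (a : B →₀ ℕ) : B →₀ ℕ :=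
  a.filter fun b => deg b ≤ k

/-- One step of the source/target operator: `∂^α((a)_{n+1}) + rₙ(a)`. -/
noncomputable def dstep {B : Type*} [DecidableEq B] (deg : B → ℕ) (diff : B → B →₀ ℤ)
    (α : Bool) (n : ℕ) (a : B →₀ ℕ) : B →₀ ℕ :=
  bdryP diff α (homog deg (n + 1) a) + trunc deg n a

/-- Auxiliary downward recursion for the source/target operators. -/
noncomputable def dmapAux {B : Type*} [DecidableEq B] (deg : B → ℕ) (diff : B → B →₀ ℤ)
    (α : Bool) : ℕ → ℕ → (B →₀ ℕ) → (B →₀ ℕ)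
  | _, 0, a => a
  | n, k + 1, a => dstep deg diff α n (dmapAux deg diff α (n + 1) k a)

/-- Degree of a chain (0 for the zero chain). -/
def degC {B : Type*} (deg : B → ℕ) (a : B →₀ ℕ) : ℕ := a.support.sup deg

/-- The source (`α = false`) and target (`α = true`) operators `d^α_n` on chains:
`d^α_n a = a` if `|a| ≤ n`, and otherwise
`d^α_n a = ∂^α((d^α_{n+1}a)_{n+1}) + rₙ(d^α_{n+1}a)`. -/
noncomputable def dmap {B : Type*} [DecidableEq B] (deg : B → ℕ) (diff : B → B →₀ ℤ)
    (α : Bool) (n : ℕ) (a : B →₀ ℕ) : B →₀ ℕ :=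
  dmapAux deg diff α n (degC deg a - n) a

/-- The augmentation evaluated on a chain. -/
noncomputable def augC {B : Type*} (aug : B → ℤ) (a : B →₀ ℕ) : ℤ :=
  a.sum fun b k => (k : ℤ) * aug b

/-- `e(a) := e(d⁺₀ a)`. -/
noncomputable def eC {B : Type*} [DecidableEq B] (deg : B → ℕ) (diff : B → B →₀ ℤ)
    (aug : B → ℤ) (a : B →₀ ℕ) : ℤ :=
  augC aug (dmap deg diff true 0 a)

/-- A chain is coherent when `e(a) = 1`. -/
def Coherent {B : Type*} [DecidableEq B] (deg : B → ℕ) (diff : B → B →₀ ℤ)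
    (aug : B → ℤ) (a : B →₀ ℕ) : Prop :=
  eC deg diff aug a = 1

/-- The axioms of an augmented directed complex (with basis): the differential decreases
degree by one, vanishes in degree 0, squares to zero, and is annihilated by the
augmentation. -/
structure IsADC {B : Type*} (deg : B → ℕ) (diff : B → B →₀ ℤ) (aug : B → ℤ) : Prop where
  diff_deg : ∀ b b', b' ∈ (diff b).support → deg b' + 1 = deg b
  diff_zero : ∀ b, deg b = 0 → diff b = 0
  diff_sq : ∀ b, ((diff b).sum fun b' k => k • diff b') = 0
  aug_diff : ∀ b, deg b = 1 → ((diff b).sum fun b' k => k * aug b') = 0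

/-- The basis is unitary when the table `⟨b⟩` of every basis element is coherent,
i.e. `e(d^α₀⟨b⟩) = 1` for both `α`. -/
def Unitary {B : Type*} [DecidableEq B] (deg : B → ℕ) (diff : B → B →₀ ℤ)
    (aug : B → ℤ) : Prop :=
  ∀ (b : B) (α : Bool), augC aug (dmap deg diff α 0 (Finsupp.single b 1)) = 1

/-- The elementary relation `x ⊙ₙ y` on basis elements of degree `≥ n`:
`⟨x⟩ₙ⁻ ∧ ⟨y⟩ₙ⁺ ≠ 0`. -/
def relO {B : Type*} [DecidableEq B] (deg : B → ℕ) (diff : B → B →₀ ℤ)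
    (n : ℕ) (x y : B) : Prop :=
  n ≤ deg x ∧ n ≤ deg y ∧
    ¬ Disjoint (dmap deg diff false n (Finsupp.single x 1)).support
        (dmap deg diff true n (Finsupp.single y 1)).support

/-- The basis is loop-free when for every `n` the reflexive-transitive closure of `⊙ₙ`
is a partial order (i.e. is antisymmetric). -/
def LoopFree {B : Type*} [DecidableEq B] (deg : B → ℕ) (diff : B → B →₀ ℤ) : Prop :=
  ∀ (n : ℕ) (x y : B), Relation.ReflTransGen (relO deg diff n) x y →
    Relation.ReflTransGen (relO deg diff n) y x → x = y

/-- The composition degree `|a|_c` of a chain, an element of `ℤ` (with value `-1` when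
the defining set is empty): `sup{ n | ∃ b ≠ b' ∈ supp a, |b| ≥ |b'| > n }`. -/
noncomputable def compDeg {B : Type*} (deg : B → ℕ) (a : B →₀ ℕ) : ℤ :=
  sSup (insert (-1) {n : ℤ | ∃ b ∈ a.support, ∃ b' ∈ a.support,
    b ≠ b' ∧ (deg b' : ℤ) ≤ (deg b : ℤ) ∧ n < (deg b' : ℤ)})

/-- The `n`-composition of chains: `x *ₙ y := (x - d⁻ₙ(x) + y)₊`. -/
noncomputable def compC {B : Type*} [DecidableEq B] (deg : B → ℕ) (diff : B → B →₀ ℤ)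
    (n : ℕ) (x y : B →₀ ℕ) : B →₀ ℕ :=
  posPart (toInt x - toInt (dmap deg diff false n x) + toInt y)

/-- Iterated `n`-composition of a list of chains (associating to the right). -/
noncomputable def compList {B : Type*} [DecidableEq B] (deg : B → ℕ)
    (diff : B → B →₀ ℤ) (n : ℕ) : List (B →₀ ℕ) → (B →₀ ℕ)
  | [] => 0
  | [x] => x
  | x :: y :: l => compC deg diff n x (compList deg diff n (y :: l))

end Chains

/-! Write `x_α` for the degree-`(k+1)` part of `d^α_{k+1} a`. Since `d^α` leaves degrees `≤ k`
untouched, `d^α_k a = (∂ x_α)^α + r_k(a)`. The boundaries `∂ x_+` and `∂ x_-` agree, by downward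
induction on `k`: `x_α = (∂ y)^α + a_{k+1}` with `∂ y` independent of `α` by induction, and
`∂((∂ y)⁺) - ∂((∂ y)⁻) = ∂∂ y = 0`. So with `z := ∂ x_±` we get
`d⁻_k a ∧ d⁺_k a = (z⁻ + r_k a) ∧ (z⁺ + r_k a) = r_k a`, as `z⁺ ∧ z⁻ = 0`. -/

namespace Chains

section Pointwise

variable {B : Type*}

lemma posPart_apply (z : B →₀ ℤ) (b : B) : posPart z b = (z b).toNat := rfl

lemma negPart_apply (z : B →₀ ℤ) (b : B) : negPart z b = (-z b).toNat := rfl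

lemma cmin_apply [DecidableEq B] (a a' : B →₀ ℕ) (b : B) :
    cmin a a' b = min (a b) (a' b) := rfl

lemma trunc_apply (deg : B → ℕ) (k : ℕ) (a : B →₀ ℕ) (b : B) :
    trunc deg k a b = if deg b ≤ k then a b else 0 := by
  classical
  exact Finsupp.filter_apply _ _ _

lemma homog_apply (deg : B → ℕ) (k : ℕ) (a : B →₀ ℕ) (b : B) :
    homog deg k a b = if deg b = k then a b else 0 := by
  classical
  exact Finsupp.filter_apply _ _ _

lemma toInt_add (a a' : B →₀ ℕ) : toInt (a + a') = toInt a + toInt a' :=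
  Finsupp.mapRange_add Nat.cast_add a a'

lemma toInt_posPart_sub_toInt_negPart (z : B →₀ ℤ) :
    toInt (posPart z) - toInt (negPart z) = z := by
  ext b
  exact Int.toNat_sub_toNat_neg (z b)

lemma cmin_negPart_add_posPart_add [DecidableEq B] (z : B →₀ ℤ) (t : B →₀ ℕ) :
    cmin (negPart z + t) (posPart z + t) = t := by
  ext b
  simp only [cmin_apply, Finsupp.add_apply, negPart_apply, posPart_apply]
  omega

end Pointwise

section Boundary

variable {B : Type*} {deg : B → ℕ} {diff : B → B →₀ ℤ}

lemma bdryP_true (a : B →₀ ℕ) : bdryP diff true a = posPart (bdry diff a) := rfl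

lemma bdryP_false (a : B →₀ ℕ) : bdryP diff false a = negPart (bdry diff a) := rfl

lemma bdry_eq_linearCombination (a : B →₀ ℕ) :
    bdry diff a = Finsupp.linearCombination ℤ diff (toInt a) := by
  rw [bdry, Finsupp.linearCombination_apply, toInt, Finsupp.sum_mapRange_index]
  simp

lemma bdry_add (a a' : B →₀ ℕ) : bdry diff (a + a') = bdry diff a + bdry diff a' := by
  simp only [bdry_eq_linearCombination, toInt_add, map_add]

lemma linearCombination_comp_self
    (hsq : ∀ b, ((diff b).sum fun b' k => k • diff b') = 0) :
    Finsupp.linearCombination ℤ diff ∘ₗ Finsupp.linearCombination ℤ diff = 0 :=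
  Finsupp.lhom_ext fun b k => by
    simp [Finsupp.linearCombination_apply _ (diff b), hsq]

-- `∂(∂c)⁺ - ∂(∂c)⁻ = ∂∂c = 0`
lemma bdry_posPart_bdry_eq_bdry_negPart_bdry
    (hsq : ∀ b, ((diff b).sum fun b' k => k • diff b') = 0) (c : B →₀ ℕ) :
    bdry diff (posPart (bdry diff c)) = bdry diff (negPart (bdry diff c)) := by
  rw [← sub_eq_zero]
  simp only [bdry_eq_linearCombination]
  rw [← map_sub, toInt_posPart_sub_toInt_negPart, ← LinearMap.comp_apply,
    linearCombination_comp_self hsq, LinearMap.zero_apply]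

lemma bdry_homog_succ_apply_of_ne (hdeg : ∀ b b', b' ∈ (diff b).support → deg b' + 1 = deg b)
    (c : B →₀ ℕ) {m : ℕ} {x : B} (hx : deg x ≠ m) :
    bdry diff (homog deg (m + 1) c) x = 0 := by
  rw [bdry, Finsupp.sum_apply]
  refine Finset.sum_eq_zero fun b hb => ?_
  have hb : deg b = m + 1 := by
    by_contra h
    simp [homog_apply, h] at hb
  by_contra h
  have := hdeg b x (Finsupp.mem_support_iff.mpr fun h0 => h (by simp [h0]))
  omega

lemma bdryP_homog_succ_apply_of_ne
    (hdeg : ∀ b b', b' ∈ (diff b).support → deg b' + 1 = deg b)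
    (α : Bool) (c : B →₀ ℕ) {m : ℕ} {x : B} (hx : deg x ≠ m) :
    bdryP diff α (homog deg (m + 1) c) x = 0 := by
  cases α <;> simp [bdryP, posPart_apply, negPart_apply, bdry_homog_succ_apply_of_ne hdeg c hx]

lemma homog_bdryP_homog_succ (hdeg : ∀ b b', b' ∈ (diff b).support → deg b' + 1 = deg b)
    (α : Bool) (m : ℕ) (a : B →₀ ℕ) :
    homog deg m (bdryP diff α (homog deg (m + 1) a)) = bdryP diff α (homog deg (m + 1) a) := by
  ext b
  by_cases hb : deg b = m
  · simp [homog_apply, hb]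
  · simp [homog_apply, hb, bdryP_homog_succ_apply_of_ne hdeg α a hb]

end Boundary

section Truncation

variable {B : Type*} {deg : B → ℕ}

lemma homog_add (k : ℕ) (a a' : B →₀ ℕ) :
    homog deg k (a + a') = homog deg k a + homog deg k a' := by
  classical
  exact Finsupp.filter_add

lemma homog_trunc_self (k : ℕ) (a : B →₀ ℕ) : homog deg k (trunc deg k a) = homog deg k a := by
  ext b
  by_cases h : deg b = k <;> simp [homog_apply, trunc_apply, h]

lemma le_degC {a : B →₀ ℕ} {b : B} (hb : a b ≠ 0) : deg b ≤ degC deg a :=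
  Finset.le_sup (Finsupp.mem_support_iff.mpr hb)

lemma trunc_of_degC_le {k : ℕ} {a : B →₀ ℕ} (h : degC deg a ≤ k) : trunc deg k a = a := by
  ext b
  by_cases hb : a b = 0
  · simp [trunc_apply, hb]
  · simp [trunc_apply, (le_degC hb).trans h]

lemma homog_of_degC_lt {k : ℕ} {a : B →₀ ℕ} (h : degC deg a < k) : homog deg k a = 0 := by
  ext b
  by_cases hb : a b = 0
  · simp [homog_apply, hb]
  · simp [homog_apply, ((le_degC hb).trans_lt h).ne]

lemma forall_of_ge_of_succ (N : ℕ) {P : ℕ → Prop}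
    (base : ∀ m, N ≤ m → P m) (succ : ∀ m, P (m + 1) → P m) (m : ℕ) : P m := by
  induction h : N - m generalizing m with
  | zero => exact base m (by omega)
  | succ k ih => exact succ m (ih (m + 1) (by omega))

end Truncation

section SourceTarget

variable {B : Type*} [DecidableEq B] {deg : B → ℕ} {diff : B → B →₀ ℤ}

lemma dmap_of_degC_le {α : Bool} {m : ℕ} {a : B →₀ ℕ} (h : degC deg a ≤ m) :
    dmap deg diff α m a = a := by
  rw [dmap, Nat.sub_eq_zero_of_le h, dmapAux]

lemma dmap_eq_dstep (α : Bool) (m : ℕ) (a : B →₀ ℕ) :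
    dmap deg diff α m a = dstep deg diff α m (dmap deg diff α (m + 1) a) := by
  rcases lt_or_ge m (degC deg a) with h | h
  · rw [dmap, dmap, show degC deg a - m = degC deg a - (m + 1) + 1 by omega, dmapAux]
  · rw [dmap_of_degC_le h, dmap_of_degC_le (by omega), dstep, homog_of_degC_lt (by omega),
      trunc_of_degC_le h]
    simp [bdryP, bdry, posPart, negPart]

lemma trunc_dstep_of_lt (hdeg : ∀ b b', b' ∈ (diff b).support → deg b' + 1 = deg b)
    {j m : ℕ} (h : j < m) (α : Bool) (a : B →₀ ℕ) :
    trunc deg j (dstep deg diff α m a) = trunc deg j a := by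
  ext b
  by_cases hb : deg b ≤ j
  · have hbdry : bdryP diff α (homog deg (m + 1) a) b = 0 :=
      bdryP_homog_succ_apply_of_ne hdeg α a (by omega)
    simp [dstep, trunc_apply, hb, hb.trans h.le, hbdry]
  · simp [trunc_apply, hb]

lemma trunc_dmap_of_lt (hdeg : ∀ b b', b' ∈ (diff b).support → deg b' + 1 = deg b)
    {j m : ℕ} (h : j < m) (α : Bool) (a : B →₀ ℕ) :
    trunc deg j (dmap deg diff α m a) = trunc deg j a := by
  induction m using forall_of_ge_of_succ (degC deg a) with
  | base m hm => rw [dmap_of_degC_le hm]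
  | succ m ih => rw [dmap_eq_dstep, trunc_dstep_of_lt hdeg h, ih (by omega)]

lemma homog_dmap_of_lt (hdeg : ∀ b b', b' ∈ (diff b).support → deg b' + 1 = deg b)
    {k m : ℕ} (h : k < m) (α : Bool) (a : B →₀ ℕ) :
    homog deg k (dmap deg diff α m a) = homog deg k a := by
  rw [← homog_trunc_self, trunc_dmap_of_lt hdeg h, homog_trunc_self]

lemma homog_dmap_self (hdeg : ∀ b b', b' ∈ (diff b).support → deg b' + 1 = deg b)
    (α : Bool) (m : ℕ) (a : B →₀ ℕ) :
    homog deg m (dmap deg diff α m a) =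
      bdryP diff α (homog deg (m + 1) (dmap deg diff α (m + 1) a)) + homog deg m a := by
  rw [dmap_eq_dstep, dstep, homog_add, homog_bdryP_homog_succ hdeg, homog_trunc_self,
    homog_dmap_of_lt hdeg m.lt_succ_self]

lemma bdry_homog_dmap_true_eq_false
    (hdeg : ∀ b b', b' ∈ (diff b).support → deg b' + 1 = deg b)
    (hsq : ∀ b, ((diff b).sum fun b' k => k • diff b') = 0) (a : B →₀ ℕ) (m : ℕ) :
    bdry diff (homog deg m (dmap deg diff true m a)) =
      bdry diff (homog deg m (dmap deg diff false m a)) := by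
  induction m using forall_of_ge_of_succ (degC deg a) with
  | base m hm => rw [dmap_of_degC_le hm, dmap_of_degC_le hm]
  | succ m ih =>
    rw [homog_dmap_self hdeg true, homog_dmap_self hdeg false, bdry_add, bdry_add, bdryP_true,
      bdryP_false, ih, bdry_posPart_bdry_eq_bdry_negPart_bdry hsq]

lemma dmap_eq_bdryP_add_trunc (hdeg : ∀ b b', b' ∈ (diff b).support → deg b' + 1 = deg b)
    (α : Bool) (k : ℕ) (a : B →₀ ℕ) :
    dmap deg diff α k a =
      bdryP diff α (homog deg (k + 1) (dmap deg diff α (k + 1) a)) + trunc deg k a := by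
  rw [dmap_eq_dstep, dstep, trunc_dmap_of_lt hdeg k.lt_succ_self]

lemma cmin_dmap_eq_trunc (hdeg : ∀ b b', b' ∈ (diff b).support → deg b' + 1 = deg b)
    (hsq : ∀ b, ((diff b).sum fun b' k => k • diff b') = 0) (k : ℕ) (a : B →₀ ℕ) :
    cmin (dmap deg diff false k a) (dmap deg diff true k a) = trunc deg k a := by
  rw [dmap_eq_bdryP_add_trunc hdeg false, dmap_eq_bdryP_add_trunc hdeg true, bdryP_false,
    bdryP_true, ← bdry_homog_dmap_true_eq_false hdeg hsq]
  exact cmin_negPart_add_posPart_add _ _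

end SourceTarget

end Chains

open Chains in
theorem trunc_eq_cmin_dmap_general {B : Type*} [DecidableEq B]
    (deg : B → ℕ) (diff : B → B →₀ ℤ) (aug : B → ℤ) (hADC : IsADC deg diff aug)
    (a : B →₀ ℕ) (n : ℕ) :
    trunc deg (n - 1) a =
      cmin (dmap deg diff false (n - 1) a) (dmap deg diff true (n - 1) a) := by
  exact (cmin_dmap_eq_trunc hADC.diff_deg hADC.diff_sq (n - 1) a).symm

open Chains in
/-- For a chain `a` of degree at least `n ≥ 1` in an augmented directed complex with
basis, the part of `a` in degrees `≤ n-1` is the meet of its source and target: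
`r_{n-1}(a) = d⁻_{n-1}(a) ∧ d⁺_{n-1}(a)`. -/
theorem trunc_eq_cmin_dmap {B : Type*} [DecidableEq B]
    (deg : B → ℕ) (diff : B → B →₀ ℤ) (aug : B → ℤ) (hADC : IsADC deg diff aug)
    (a : B →₀ ℕ) (n : ℕ) (hn1 : 1 ≤ n) (hn : n ≤ degC deg a) :
    trunc deg (n - 1) a =
      cmin (dmap deg diff false (n - 1) a) (dmap deg diff true (n - 1) a) :=
  trunc_eq_cmin_dmap_general deg diff aug hADC a n
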